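/- Let E be a complete locally convex Hausdorff space and (f_n) a sequence of continuous weakly integrable functions ℝ^d → E, each having a Pettis integral, converging pointwise almost everywhere to a continuous function f : ℝ^d → E. Suppose for every continuous seminorm p on E there is g_p ∈ L¹ with p(f_n(x)) ≤ g_p(x) for all n and a.e. x. Then f has a Pettis integral and ∫ f dμ = lim_n ∫ f_n dμ. -/

import Mathlib

/-!
For a continuous seminorm `p`, Hahn–Banach gives `p (e n - e m) ≤ ∫ p (f n - f m)`, and the right
side tends to `0` by scalar dominated convergence (with bound `2 g_p`), so the Pettis integrals
`e n` form a Cauchy sequence. Its limit `I` exists by completeness, and dominated convergence for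
the scalar functions `φ ∘ f n` identifies `I` as the Pettis integral of the pointwise limit.
-/

open MeasureTheory Filter Topology

section Seminorm

variable {E : Type*} [AddCommGroup E] [Module ℝ E] [TopologicalSpace E] [PolynormableSpace ℝ E]

theorem Seminorm.exists_strongDual_apply_eq {p : Seminorm ℝ E} (hp : Continuous p) (x : E) :
    ∃ φ : StrongDual ℝ E, φ x = p x ∧ ∀ y, |φ y| ≤ p y := by
  by_cases hpx : p x = 0
  · exact ⟨0, by simp [hpx], fun y => by simp⟩
  have hx : x ≠ 0 := by rintro rfl; simp at hpx
  set F : E →ₗ.[ℝ] ℝ := LinearPMap.mkSpanSingleton x (p x) hx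
  obtain ⟨φ, hφF, hφp⟩ := Module.Dual.exists_continuous_extension_of_le_seminorm_real
    F.domain F.toFun hp fun ⟨z, hz⟩ => by
      obtain ⟨c, rfl⟩ := Submodule.mem_span_singleton.mp hz
      calc F ⟨c • x, hz⟩ = c * p x := LinearPMap.mkSpanSingleton'_apply _ _ _ c hz
        _ ≤ |c| * p x := by gcongr; exact le_abs_self c
        _ = p (c • x) := by rw [map_smul_eq_mul, Real.norm_eq_abs]
  exact ⟨φ, (hφF ⟨x, _⟩).trans (LinearPMap.mkSpanSingleton_apply ℝ ℝ hx _), hφp⟩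

end Seminorm

theorem cauchySeq_of_tendsto_seminorm_sub {E ι : Type*} [AddCommGroup E] [Module ℝ E]
    [UniformSpace E] [IsUniformAddGroup E] [PolynormableSpace ℝ E]
    [SemilatticeSup ι] [Nonempty ι] {u : ι → E}
    (h : ∀ p : Seminorm ℝ E, Continuous p →
      Tendsto (fun ij : ι × ι => p (u ij.1 - u ij.2)) atTop (𝓝 0)) :
    CauchySeq u := by
  rw [cauchySeq_iff_tendsto, uniformity_eq_comap_nhds_zero, tendsto_comap_iff,
    (PolynormableSpace.withSeminorms ℝ E).tendsto_nhds]
  rintro ⟨p, hp⟩ ε hε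
  filter_upwards [(h p hp).eventually (gt_mem_nhds hε)] with ij hij
  simpa [map_sub_rev p] using hij

section PettisIntegral

variable {α E : Type*} [MeasurableSpace α] {μ : Measure α}
  [AddCommGroup E] [Module ℝ E] [TopologicalSpace E]

def HasPettisIntegral (μ : Measure α) (h : α → E) (I : E) : Prop :=
  ∀ φ : StrongDual ℝ E, Integrable (fun x => φ (h x)) μ ∧ ∫ x, φ (h x) ∂μ = φ I

namespace HasPettisIntegral

variable {h k : α → E} {I J : E}

theorem sub (hI : HasPettisIntegral μ h I) (hJ : HasPettisIntegral μ k J) :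
    HasPettisIntegral μ (h - k) (I - J) := fun φ => by
  simp only [Pi.sub_apply, map_sub]
  exact ⟨(hI φ).1.sub (hJ φ).1, by rw [integral_sub (hI φ).1 (hJ φ).1, (hI φ).2, (hJ φ).2]⟩

theorem seminorm_le_integral [PolynormableSpace ℝ E] (hI : HasPettisIntegral μ h I)
    {p : Seminorm ℝ E} (hp : Continuous p) (hint : Integrable (fun x => p (h x)) μ) :
    p I ≤ ∫ x, p (h x) ∂μ := by
  obtain ⟨φ, hφI, hφp⟩ := p.exists_strongDual_apply_eq hp I
  calc p I = ∫ x, φ (h x) ∂μ := by rw [(hI φ).2, hφI]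
    _ ≤ ∫ x, p (h x) ∂μ := integral_mono (hI φ).1 hint fun x => (le_abs_self _).trans (hφp _)

theorem of_tendsto {f : ℕ → α → E} {e : ℕ → E} {g : α → E}
    (he : ∀ n, HasPettisIntegral μ (f n) (e n)) (heI : Tendsto e atTop (𝓝 I))
    (hfg : ∀ᵐ x ∂μ, Tendsto (fun n => f n x) atTop (𝓝 (g x)))
    (hdom : ∀ φ : StrongDual ℝ E, ∃ bound : α → ℝ, Integrable bound μ ∧
      ∀ n, ∀ᵐ x ∂μ, ‖φ (f n x)‖ ≤ bound x) :
    HasPettisIntegral μ g I := fun φ => by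
  obtain ⟨bound, hbound, hle⟩ := hdom φ
  have hφfg : ∀ᵐ x ∂μ, Tendsto (fun n => φ (f n x)) atTop (𝓝 (φ (g x))) := by
    filter_upwards [hfg] with x hx using (φ.continuous.tendsto _).comp hx
  have hmeas : ∀ n, AEStronglyMeasurable (fun x => φ (f n x)) μ := fun n =>
    (he n φ).1.aestronglyMeasurable
  have hglim : ∀ᵐ x ∂μ, ‖φ (g x)‖ ≤ bound x := by
    filter_upwards [ae_all_iff.mpr hle, hφfg] with x hx hlim
    exact le_of_tendsto hlim.norm (Eventually.of_forall hx)
  refine ⟨hbound.mono' (aestronglyMeasurable_of_tendsto_ae atTop hmeas hφfg) hglim, ?_⟩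
  refine tendsto_nhds_unique (tendsto_integral_of_dominated_convergence bound hmeas hbound hle
    hφfg) ?_
  simpa only [(he _ φ).2, Function.comp_def] using (φ.continuous.tendsto I).comp heI

end HasPettisIntegral

theorem tendsto_seminorm_sub_of_dominated [TopologicalSpace α] [OpensMeasurableSpace α]
    [IsTopologicalAddGroup E] [PolynormableSpace ℝ E]
    {f : ℕ → α → E} {e : ℕ → E} {g : α → E} (hf : ∀ n, Continuous (f n))
    (he : ∀ n, HasPettisIntegral μ (f n) (e n))
    (hfg : ∀ᵐ x ∂μ, Tendsto (fun n => f n x) atTop (𝓝 (g x)))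
    {p : Seminorm ℝ E} (hp : Continuous p) {bound : α → ℝ} (hbound : Integrable bound μ)
    (hle : ∀ n, ∀ᵐ x ∂μ, p (f n x) ≤ bound x) :
    Tendsto (fun nm : ℕ × ℕ => p (e nm.1 - e nm.2)) atTop (𝓝 0) := by
  set F : ℕ × ℕ → α → ℝ := fun nm x => p (f nm.1 x - f nm.2 x)
  have hmeas : ∀ nm, AEStronglyMeasurable (F nm) μ := fun nm =>
    (hp.comp ((hf nm.1).sub (hf nm.2))).aestronglyMeasurable
  have hFle : ∀ nm, ∀ᵐ x ∂μ, ‖F nm x‖ ≤ bound x + bound x := fun nm => by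
    filter_upwards [hle nm.1, hle nm.2] with x h1 h2
    rw [Real.norm_of_nonneg (apply_nonneg _ _)]
    exact (map_sub_le_add p _ _).trans (add_le_add h1 h2)
  have hF0 : ∀ᵐ x ∂μ, Tendsto (fun nm => F nm x) atTop (𝓝 0) := by
    filter_upwards [hfg] with x hx
    rw [← prod_atTop_atTop_eq]
    exact (hp.tendsto' _ 0 (by simp)).comp ((hx.comp tendsto_fst).sub (hx.comp tendsto_snd))
  have hint : ∀ nm, Integrable (F nm) μ := fun nm =>
    (hbound.add hbound).mono' (hmeas nm) (hFle nm)
  have hlim : Tendsto (fun nm => ∫ x, F nm x ∂μ) atTop (𝓝 0) := by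
    simpa using tendsto_integral_filter_of_dominated_convergence _ (Eventually.of_forall hmeas)
      (Eventually.of_forall hFle) (hbound.add hbound) hF0
  refine squeeze_zero (fun _ => apply_nonneg _ _) (fun nm => ?_) hlim
  exact ((he nm.1).sub (he nm.2)).seminorm_le_integral hp (hint nm)

end PettisIntegral

theorem stmt6_general (d : ℕ) {E : Type*} [AddCommGroup E] [Module ℝ E]
    [UniformSpace E] [IsUniformAddGroup E] [ContinuousSMul ℝ E]
    [LocallyConvexSpace ℝ E] [CompleteSpace E]
    (f : ℕ → EuclideanSpace ℝ (Fin d) → E) (g : EuclideanSpace ℝ (Fin d) → E)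
    (e : ℕ → E)
    (hfc : ∀ n, Continuous (f n))
    (hPettis : ∀ n, ∀ φ : E →L[ℝ] ℝ,
      Integrable (fun x => φ (f n x)) ∧ (∫ x, φ (f n x)) = φ (e n))
    (hae : ∀ᵐ x : EuclideanSpace ℝ (Fin d),
      Tendsto (fun n => f n x) atTop (nhds (g x)))
    (hdom : ∀ p : Seminorm ℝ E, Continuous ⇑p →
      ∃ gp : EuclideanSpace ℝ (Fin d) → ℝ, Integrable gp ∧
        ∀ n, ∀ᵐ x : EuclideanSpace ℝ (Fin d), p (f n x) ≤ gp x) :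
    ∃ I : E,
      (∀ φ : E →L[ℝ] ℝ,
        Integrable (fun x => φ (g x)) ∧ (∫ x, φ (g x)) = φ I) ∧
      Tendsto e atTop (nhds I) := by
  have hcauchy : CauchySeq e := cauchySeq_of_tendsto_seminorm_sub fun p hp => by
    obtain ⟨bound, hbound, hle⟩ := hdom p hp
    exact tendsto_seminorm_sub_of_dominated hfc hPettis hae hp hbound hle
  obtain ⟨I, hI⟩ := cauchySeq_tendsto_of_complete hcauchy
  refine ⟨I, HasPettisIntegral.of_tendsto hPettis hI hae fun φ => ?_, hI⟩
  obtain ⟨bound, hbound, hle⟩ := hdom φ.toLinearMap.toSeminorm φ.continuous.norm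
  exact ⟨bound, hbound, hle⟩

/-- Dominated convergence theorem for Pettis integrals in a complete lcHs. -/
theorem stmt6 (d : ℕ) {E : Type*} [AddCommGroup E] [Module ℝ E]
    [UniformSpace E] [IsUniformAddGroup E] [ContinuousSMul ℝ E]
    [LocallyConvexSpace ℝ E] [T2Space E] [CompleteSpace E]
    (f : ℕ → EuclideanSpace ℝ (Fin d) → E) (g : EuclideanSpace ℝ (Fin d) → E)
    (e : ℕ → E)
    (hfc : ∀ n, Continuous (f n))
    (hPettis : ∀ n, ∀ φ : E →L[ℝ] ℝ,
      Integrable (fun x => φ (f n x)) ∧ (∫ x, φ (f n x)) = φ (e n))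
    (hgc : Continuous g)
    (hae : ∀ᵐ x : EuclideanSpace ℝ (Fin d),
      Tendsto (fun n => f n x) atTop (nhds (g x)))
    (hdom : ∀ p : Seminorm ℝ E, Continuous ⇑p →
      ∃ gp : EuclideanSpace ℝ (Fin d) → ℝ, Integrable gp ∧
        ∀ n, ∀ᵐ x : EuclideanSpace ℝ (Fin d), p (f n x) ≤ gp x) :
    ∃ I : E,
      (∀ φ : E →L[ℝ] ℝ,
        Integrable (fun x => φ (g x)) ∧ (∫ x, φ (g x)) = φ I) ∧
      Tendsto e atTop (nhds I) :=
  stmt6_general d f g e hfc hPettis hae hdom
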